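/- Let n ≥ 1, let B be an n×n real matrix, and let ν ∈ ℝⁿ be a unit vector (with respect to the Euclidean norm). The function ω(t) = det(I + tB) · ‖(I + tB)⁻ᵀ ν‖, defined for t in a neighbourhood of 0 (where I + tB is invertible), is differentiable at t = 0 with derivative ω'(0) = trace B − ⟨Bν, ν⟩. -/

import Mathlib

/-!
Expanding, `det (1 + t • B) = 1 + t · trace B + O(t²)`, and inversion has derivative `-B` along
`t ↦ 1 + t • B` at `t = 0`, so `w t = (1 + t • B)⁻ᵀ ν` satisfies `w 0 = ν` and `w' 0 = -Bᵀ ν`.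
As `‖ν‖ = 1`, the derivative of `‖w t‖` at `0` is `⟪ν, -Bᵀ ν⟫ = -⟪B ν, ν⟫`, and the product rule
gives `trace B - ⟪B ν, ν⟫`.
-/

open Matrix RealInnerProductSpace

open Polynomial in
theorem hasDerivAt_det_one_add_smul {𝕜 ι : Type*} [NontriviallyNormedField 𝕜] [Fintype ι]
    [DecidableEq ι] (B : Matrix ι ι 𝕜) :
    HasDerivAt (fun t : 𝕜 => (1 + t • B).det) B.trace 0 := by
  set p := (det (1 + (X : 𝕜[X]) • B.map C)).divX.divX
  have hlin : HasDerivAt (fun t : 𝕜 => 1 + B.trace * t) B.trace 0 := by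
    simpa using ((hasDerivAt_id (0 : 𝕜)).const_mul B.trace).const_add 1
  have hrem : HasDerivAt (fun t : 𝕜 => p.eval t * t ^ 2) 0 0 := by
    simpa using (p.hasDerivAt 0).fun_mul (hasDerivAt_pow 2 (0 : 𝕜))
  rw [funext fun t : 𝕜 => det_one_add_smul t B]
  simpa using hlin.fun_add hrem

theorem hasDerivAt_ringInverse_one_add_smul {𝕜 R : Type*} [NontriviallyNormedField 𝕜]
    [NormedRing R] [HasSummableGeomSeries R] [NormedAlgebra 𝕜 R] (a : R) :
    HasDerivAt (fun t : 𝕜 => Ring.inverse (1 + t • a)) (-a) 0 := by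
  have h := (hasFDerivAt_ringInverse (𝕜 := 𝕜) (1 : Rˣ)).comp_hasDerivAt_of_eq (0 : 𝕜)
    (((hasDerivAt_id (0 : 𝕜)).smul_const a).const_add 1) (by simp)
  simpa [Function.comp_def] using h

theorem HasDerivAt.norm {F : Type*} [NormedAddCommGroup F] [InnerProductSpace ℝ F]
    {f : ℝ → F} {f' : F} {x : ℝ} (hf : HasDerivAt f f' x) (h0 : f x ≠ 0) :
    HasDerivAt (fun y => ‖f y‖) (⟪f x, f'⟫ / ‖f x‖) x := by
  have h := hf.norm_sq.sqrt (by positivity)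
  simp only [Real.sqrt_sq (norm_nonneg _)] at h
  convert h using 1
  field_simp

section

-- Any norm on matrices gives the same derivatives; the ℓ∞ operator norm makes them a normed algebra.
attribute [local instance] Matrix.linftyOpNormedRing Matrix.linftyOpNormedAlgebra

theorem hasDerivAt_toEuclideanLin_transpose_inv_one_add_smul {𝕜 ι : Type*} [RCLike 𝕜]
    [Fintype ι] [DecidableEq ι] (B : Matrix ι ι 𝕜) (v : EuclideanSpace 𝕜 ι) :
    HasDerivAt (fun t : 𝕜 => toEuclideanLin ((1 + t • B)⁻¹ᵀ) v)
      (-toEuclideanLin Bᵀ v) 0 := by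
  let L : Matrix ι ι 𝕜 →ₗ[𝕜] EuclideanSpace 𝕜 ι := (LinearMap.applyₗ v).comp
    (toEuclideanLin.toLinearMap.comp (transposeLinearEquiv ι ι 𝕜 𝕜).toLinearMap)
  have h := L.toContinuousLinearMap.hasFDerivAt.comp_hasDerivAt (0 : 𝕜)
    (hasDerivAt_ringInverse_one_add_smul (𝕜 := 𝕜) B)
  simp only [nonsing_inv_eq_ringInverse]
  exact h.congr_deriv (show L (-B) = _ by simp [L])

end

theorem real_inner_toEuclideanLin_transpose {ι : Type*} [Fintype ι] [DecidableEq ι]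
    (B : Matrix ι ι ℝ) (v w : EuclideanSpace ℝ ι) :
    ⟪v, toEuclideanLin Bᵀ w⟫ = ⟪toEuclideanLin B v, w⟫ := by
  rw [← conjTranspose_eq_transpose_of_trivial, toEuclideanLin_conjTranspose_eq_adjoint,
    LinearMap.adjoint_inner_right]

theorem surface_jacobian_hasDerivAt_general (n : ℕ)
    (B : Matrix (Fin n) (Fin n) ℝ) (ν : EuclideanSpace ℝ (Fin n)) (hν : ‖ν‖ = 1) :
    HasDerivAt
      (fun t : ℝ =>
        ((1 : Matrix (Fin n) (Fin n) ℝ) + t • B).det *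
          ‖Matrix.toEuclideanLin ((((1 : Matrix (Fin n) (Fin n) ℝ) + t • B)⁻¹)ᵀ) ν‖)
      (B.trace - (inner ℝ (Matrix.toEuclideanLin B ν) ν : ℝ)) 0 := by
  have hw := hasDerivAt_toEuclideanLin_transpose_inv_one_add_smul B ν
  have hw₀ : toEuclideanLin ((1 + (0 : ℝ) • B)⁻¹ᵀ) ν = ν := by simp
  have hν₀ : ν ≠ 0 := norm_ne_zero_iff.mp (by simp [hν])
  refine ((hasDerivAt_det_one_add_smul B).fun_mul (hw.norm (by rwa [hw₀]))).congr_deriv ?_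
  rw [hw₀, hν, inner_neg_right, real_inner_toEuclideanLin_transpose]
  simp only [zero_smul, add_zero, det_one, one_mul, div_one]
  ring

/-- Derivative of the surface Jacobian `ω(t) = det(I + tB) ‖(I + tB)⁻ᵀ ν‖` at `t = 0`:
`ω'(0) = trace B − ⟨Bν, ν⟩` (Lemma 4.1 of the paper). -/
theorem surface_jacobian_hasDerivAt (n : ℕ) (hn : 1 ≤ n)
    (B : Matrix (Fin n) (Fin n) ℝ) (ν : EuclideanSpace ℝ (Fin n)) (hν : ‖ν‖ = 1) :
    HasDerivAt
      (fun t : ℝ =>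
        ((1 : Matrix (Fin n) (Fin n) ℝ) + t • B).det *
          ‖Matrix.toEuclideanLin ((((1 : Matrix (Fin n) (Fin n) ℝ) + t • B)⁻¹)ᵀ) ν‖)
      (B.trace - (inner ℝ (Matrix.toEuclideanLin B ν) ν : ℝ)) 0 :=
  surface_jacobian_hasDerivAt_general n B ν hν
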